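/- Let (Ω(A), d) be a differential calculus over A and let ∇: I₁A → A be a divergence (hom-connection), i.e., ∇(φ·a) = ∇(φ)a + φ(da) for all φ ∈ I₁A = Hom_A(Ω¹(A), A) and a ∈ A. Extend ∇ to ∇ₙ: I_{n+1}A → IₙA by ∇ₙ(φ)(ω) = ∇(φ·ω) + (-1)^{n+1} φ(dω). Then the Leibniz rule ∇ₙ(φ·ω) = ∇_{m+n}(φ)·ω + (-1)^{m+n} φ·dω holds for all φ ∈ I_{m+n+1}A and ω ∈ Ωᵐ(A). -/

import Mathlib

/-! The two divergence terms agree by associativity, so the identity reduces to one for the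
correction terms: expanding `d (ω * η)` by the graded Leibniz rule, the two `d ω * η` terms
carry opposite signs and cancel, and `(-1)^(m+n+1) (-1)^m = (-1)^(n+1)` leaves exactly the
correction term of `∇ₙ`. -/

theorem neg_one_pow_add_add_one_mul_neg_one_pow {R : Type*} [Monoid R] [HasDistribNeg R]
    (m n : ℕ) : (-1 : R) ^ (m + n + 1) * (-1) ^ m = (-1) ^ (n + 1) := by
  rw [← pow_add, show m + n + 1 + m = 2 * m + (n + 1) by ring, pow_add, pow_mul, neg_one_sq,
    one_pow, one_mul]

theorem neg_one_pow_smul_map_leibniz {Ω A : Type*} [Ring Ω] [AddCommGroup A] (d : Ω → Ω)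
    (φ : Ω →+ A) {m n : ℕ} {ω η : Ω}
    (hLeib : d (ω * η) = d ω * η + ((-1 : ℤ) ^ m) • (ω * d η)) :
    ((-1 : ℤ) ^ (m + n + 1)) • φ (d (ω * η)) + ((-1 : ℤ) ^ (m + n)) • φ (d ω * η) =
      ((-1 : ℤ) ^ (n + 1)) • φ (ω * d η) := by
  rw [hLeib, map_add, map_zsmul, smul_add, smul_smul, neg_one_pow_add_add_one_mul_neg_one_pow,
    pow_succ, mul_neg_one, neg_smul]
  abel

theorem stmt_11_general (A : Type*) [Ring A] (Ω : Type*) [Ring Ω]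
    (𝒜 : ℕ → AddSubgroup Ω)
    (d : Ω →+ Ω)
    (hLeib : ∀ (p q : ℕ) (α β : Ω), α ∈ 𝒜 p → β ∈ 𝒜 q →
      d (α * β) = d α * β + ((-1 : ℤ) ^ p) • (α * d β))
    (Del : (Ω → A) → A)
    (m n : ℕ) (φ : Ω →+ A) (ω : Ω) (hω : ω ∈ 𝒜 m) :
    let ext : ℕ → (Ω → A) → (Ω → A) := fun nn ψ η =>
      Del (fun ξ => ψ (η * ξ)) + ((-1 : ℤ) ^ (nn + 1)) • ψ (d η)
    ∀ η ∈ 𝒜 n,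
      ext n (fun ξ => φ (ω * ξ)) η =
        ext (m + n) (fun ξ => φ ξ) (ω * η) + ((-1 : ℤ) ^ (m + n)) • φ (d ω * η) := by
  intro ext η hη
  simp only [ext, mul_assoc]
  rw [add_assoc, neg_one_pow_smul_map_leibniz d φ (hLeib m n ω η hω hη)]

/-- Let `(Ω(A), d)` be a differential calculus over `A` (modelled
by its total graded algebra `Ω` with grading `𝒜`, `Ω⁰ = A` realised by
`A`-valued functionals), and let `∇ : I₁A → A` be a divergence, extended to
`∇ₙ : I_{n+1}A → IₙA` by `∇ₙ(φ)(ω) = ∇(φ·ω) + (-1)^{n+1} φ(dω)`, where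
`(φ·ω)(ω') = φ(ω ∧ ω')`.  Then the Leibniz rule
`∇ₙ(φ·ω) = ∇_{m+n}(φ)·ω + (-1)^{m+n} φ·dω`
holds for all `φ ∈ I_{m+n+1}A` and `ω ∈ Ωᵐ(A)` (both sides evaluated on an
arbitrary `η ∈ Ωⁿ(A)`). -/
theorem stmt_11 (A : Type*) [Ring A] (Ω : Type*) [Ring Ω]
    (𝒜 : ℕ → AddSubgroup Ω)
    (d : Ω →+ Ω)
    (hdeg : ∀ n, ∀ α ∈ 𝒜 n, d α ∈ 𝒜 (n + 1))
    (hLeib : ∀ (p q : ℕ) (α β : Ω), α ∈ 𝒜 p → β ∈ 𝒜 q →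
      d (α * β) = d α * β + ((-1 : ℤ) ^ p) • (α * d β))
    (Del : (Ω → A) → A)
    (m n : ℕ) (φ : Ω →+ A) (ω : Ω) (hω : ω ∈ 𝒜 m) :
    let ext : ℕ → (Ω → A) → (Ω → A) := fun nn ψ η =>
      Del (fun ξ => ψ (η * ξ)) + ((-1 : ℤ) ^ (nn + 1)) • ψ (d η)
    ∀ η ∈ 𝒜 n,
      ext n (fun ξ => φ (ω * ξ)) η =
        ext (m + n) (fun ξ => φ ξ) (ω * η) + ((-1 : ℤ) ^ (m + n)) • φ (d ω * η) :=
  stmt_11_general A Ω 𝒜 d hLeib Del m n φ ω hω
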